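/- arXiv:2110.02882 — 2 statements merged into one kernel-verified Lean document; each statement's English description precedes it below -/
import Mathlib

section
/- Let Ω ⊆ ℝᵈ be a bounded open set and B an N-function such that B and B̃ satisfy Δ₂. Suppose (u_ε)_{ε>0} weakly reiteratively two-scale converges in L^B(Ω) to u₀. Then: (i) for every g : Ω×ℝᵈ → ℝ measurable in x, continuous and Y-periodic in y, with x ↦ sup_y |g(x,y)| of finite Luxemburg norm ‖·‖_{B̃,Ω}, one has ∫_Ω u_ε(x) g(x, x/ε) dx → ∫_Ω∫_Y (∫_Z u₀(x,y,z) dz) g(x,y) dx dy; and (ii) for every measurable g : Ω → ℝ with ∫_Ω B̃(|g|) dx < ∞, one has ∫_Ω u_ε g dx → ∫_Ω ũ₀ g dx, where ũ₀(x) = ∫_Y∫_Z u₀(x,y,z) dy dz. -/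
open MeasureTheory Filter Topology
open scoped ENNReal

noncomputable section

/-- Euclidean space `ℝᵈ`. -/
abbrev Rd (d : ℕ) := EuclideanSpace ℝ (Fin d)

/-- The unit cube `Y = Z = (-1/2, 1/2)ᵈ`. -/
def unitCube (d : ℕ) : Set (Rd d) := {y | ∀ i, -(1/2 : ℝ) < y i ∧ y i < (1/2 : ℝ)}

/-- Euclidean dot product. -/
def dotp {d : ℕ} (a b : Rd d) : ℝ := ∑ i, a i * b i

/-- The rescaled point `x/ε`. -/
def scaled {d : ℕ} (x : Rd d) (ε : ℝ) : Rd d := WithLp.toLp 2 (fun i => x i / ε)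

/-- An N-function: continuous, convex on `[0,∞)`, positive for `t > 0`,
`B(t)/t → 0` as `t → 0⁺` and `B(t)/t → ∞` as `t → ∞`. -/
structure IsNFunction (B : ℝ → ℝ) : Prop where
  continuous : Continuous B
  convexOn : ConvexOn ℝ (Set.Ici 0) B
  map_zero : B 0 = 0
  nonneg : ∀ t, 0 ≤ B t
  pos : ∀ t, 0 < t → 0 < B t
  tendsto_zero : Tendsto (fun t => B t / t) (nhdsWithin 0 (Set.Ioi 0)) (nhds 0)
  tendsto_atTop : Tendsto (fun t => B t / t) atTop atTop

/-- The complementary N-function `B̃(t) = sup_{s ≥ 0} (s t - B s)`. -/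
def conjN (B : ℝ → ℝ) (t : ℝ) : ℝ := sSup {v : ℝ | ∃ s : ℝ, 0 ≤ s ∧ v = s * t - B s}

/-- The Δ₂ condition. -/
def Delta2 (B : ℝ → ℝ) : Prop := ∃ α : ℝ, 0 < α ∧ ∀ t : ℝ, 0 ≤ t → B (2 * t) ≤ α * B t

/-- The modular `∫_E B(|u|/k)` (as an extended nonnegative real). -/
def modular {d : ℕ} (B : ℝ → ℝ) (E : Set (Rd d)) (u : Rd d → ℝ) (k : ℝ) : ℝ≥0∞ :=
  ∫⁻ x in E, ENNReal.ofReal (B (|u x| / k))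

/-- The Luxemburg norm `‖u‖_{B,E}`. -/
def luxNorm {d : ℕ} (B : ℝ → ℝ) (E : Set (Rd d)) (u : Rd d → ℝ) : ℝ :=
  sInf {k : ℝ | 0 < k ∧ modular B E u k ≤ 1}

/-- `u` has finite Luxemburg norm over `E`. -/
def FiniteLux {d : ℕ} (B : ℝ → ℝ) (E : Set (Rd d)) (u : Rd d → ℝ) : Prop :=
  ∃ k : ℝ, 0 < k ∧ modular B E u k ≤ 1

/-- Modular of a function on `Y × Z`. -/
def modularYZ {d : ℕ} (B : ℝ → ℝ) (u : Rd d → Rd d → ℝ) (k : ℝ) : ℝ≥0∞ :=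
  ∫⁻ y in unitCube d, ∫⁻ z in unitCube d, ENNReal.ofReal (B (|u y z| / k))

/-- Luxemburg norm over `Y × Z`. -/
def luxNormYZ {d : ℕ} (B : ℝ → ℝ) (u : Rd d → Rd d → ℝ) : ℝ :=
  sInf {k : ℝ | 0 < k ∧ modularYZ B u k ≤ 1}

/-- Modular of a function on `Ω × Y × Z`. -/
def modular3 {d : ℕ} (B : ℝ → ℝ) (Ω : Set (Rd d)) (u : Rd d → Rd d → Rd d → ℝ) (k : ℝ) : ℝ≥0∞ :=
  ∫⁻ x in Ω, ∫⁻ y in unitCube d, ∫⁻ z in unitCube d, ENNReal.ofReal (B (|u x y z| / k))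

/-- Luxemburg norm over `Ω × Y × Z`. -/
def luxNorm3 {d : ℕ} (B : ℝ → ℝ) (Ω : Set (Rd d)) (u : Rd d → Rd d → Rd d → ℝ) : ℝ :=
  sInf {k : ℝ | 0 < k ∧ modular3 B Ω u k ≤ 1}

/-- Shift of a point by an integer vector. -/
def perShift {d : ℕ} (y : Rd d) (k : Fin d → ℤ) : Rd d := WithLp.toLp 2 (fun i => y i + (k i : ℝ))

/-- `Y`-periodicity. -/
def YPeriodic {d : ℕ} (g : Rd d → ℝ) : Prop :=
  ∀ (y : Rd d) (k : Fin d → ℤ), g (perShift y k) = g y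

/-- `Y × Z`-periodicity. -/
def YZPeriodic {d : ℕ} (g : Rd d → Rd d → ℝ) : Prop :=
  ∀ (y z : Rd d) (k h : Fin d → ℤ), g (perShift y k) (perShift z h) = g y z

/-- `sup_{(y,z)} |f(x,y,z)|`. -/
def supYZ {d : ℕ} (f : Rd d → Rd d → Rd d → ℝ) (x : Rd d) : ℝ :=
  sSup {v : ℝ | ∃ y z, v = |f x y z|}

/-- `sup_y |g(x,y)|`. -/
def supY {d : ℕ} (g : Rd d → Rd d → ℝ) (x : Rd d) : ℝ :=
  sSup {v : ℝ | ∃ y, v = |g x y|}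

/-- `sup_z |u(y,z)|`. -/
def supZ {d : ℕ} (u : Rd d → Rd d → ℝ) (y : Rd d) : ℝ :=
  sSup {v : ℝ | ∃ z, v = |u y z|}

/-- Admissible test function for reiterated two-scale convergence: measurable in `x`,
continuous and `Y × Z`-periodic in `(y,z)`, with `x ↦ sup_{(y,z)} |f(x,y,z)|` of finite
Luxemburg norm `‖·‖_{Bdual, Ω}`. -/
structure AdmissibleTest {d : ℕ} (Bdual : ℝ → ℝ) (Ω : Set (Rd d))
    (f : Rd d → Rd d → Rd d → ℝ) : Prop where
  meas : ∀ y z, Measurable fun x => f x y z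
  cont : ∀ x, Continuous fun p : Rd d × Rd d => f x p.1 p.2
  periodic : ∀ x, YZPeriodic (f x)
  finLux : FiniteLux Bdual Ω (supYZ f)

/-- Weak reiterated two-scale convergence in `L^B(Ω)` of a family `u` indexed by `ι`,
whose scales are given by `e : ι → ℝ`, along a filter `l`. -/
def WeakReitTwoScale {d : ℕ} (B : ℝ → ℝ) (Ω : Set (Rd d)) {ι : Type*} (l : Filter ι)
    (e : ι → ℝ) (u : ι → Rd d → ℝ) (u₀ : Rd d → Rd d → Rd d → ℝ) : Prop :=
  ∀ f : Rd d → Rd d → Rd d → ℝ, AdmissibleTest (conjN B) Ω f →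
    Tendsto (fun j => ∫ x in Ω, u j x * f x (scaled x (e j)) (scaled x ((e j) ^ 2)))
      l (𝓝 (∫ x in Ω, ∫ y in unitCube d, ∫ z in unitCube d, u₀ x y z * f x y z))

/-- Properties required of a reiterated two-scale limit: measurable,
`Y × Z`-periodic in `(y,z)` and with finite modular over `Ω × Y × Z`. -/
def GoodLimit {d : ℕ} (B : ℝ → ℝ) (Ω : Set (Rd d)) (u₀ : Rd d → Rd d → Rd d → ℝ) : Prop :=
  Measurable (fun p : Rd d × Rd d × Rd d => u₀ p.1 p.2.1 p.2.2) ∧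
  (∀ x, YZPeriodic (u₀ x)) ∧
  (∫⁻ x in Ω, ∫⁻ y in unitCube d, ∫⁻ z in unitCube d, ENNReal.ofReal (B (|u₀ x y z|))) < ⊤

/-- The gradient of a (differentiable) function, as a vector field. -/
def gradOf {d : ℕ} (θ : Rd d → ℝ) (x : Rd d) : Rd d :=
  WithLp.toLp 2 (fun i => fderiv ℝ θ x (EuclideanSpace.single i 1))

/-- `θ ∈ C_c^∞(Ω)`. -/
def IsTestOn {d : ℕ} (Ω : Set (Rd d)) (θ : Rd d → ℝ) : Prop :=
  ContDiff ℝ (⊤ : ℕ∞) θ ∧ HasCompactSupport θ ∧ tsupport θ ⊆ Ω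

/-- `Du` is the weak gradient of `u` on `Ω`. -/
def HasWeakGradOn {d : ℕ} (Ω : Set (Rd d)) (u : Rd d → ℝ) (Du : Rd d → Rd d) : Prop :=
  ∀ θ : Rd d → ℝ, IsTestOn Ω θ → ∀ i,
    ∫ x in Ω, u x * gradOf θ x i = -∫ x in Ω, Du x i * θ x

/-- `Dg` is the weak gradient of the periodic function `g` (integration by parts against
periodic smooth test functions on the unit cell). -/
def HasWeakGradPer {d : ℕ} (g : Rd d → ℝ) (Dg : Rd d → Rd d) : Prop :=
  ∀ θ : Rd d → ℝ, ContDiff ℝ (⊤ : ℕ∞) θ → YPeriodic θ → ∀ i,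
    ∫ y in unitCube d, g y * gradOf θ y i = -∫ y in unitCube d, Dg y i * θ y

/-- Membership `u ∈ W₀¹ L^B(Ω)`, with weak gradient `Du`. -/
structure MemW0 {d : ℕ} (B : ℝ → ℝ) (Ω : Set (Rd d)) (u : Rd d → ℝ) (Du : Rd d → Rd d) :
    Prop where
  locInt : LocallyIntegrableOn u Ω
  grad : HasWeakGradOn Ω u Du
  fin_u : FiniteLux B Ω u
  fin_Du : ∀ i, FiniteLux B Ω fun x => Du x i
  approx : ∃ φ : ℕ → Rd d → ℝ, (∀ n, IsTestOn Ω (φ n)) ∧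
    Tendsto (fun n => luxNorm B Ω (fun x => u x - φ n x)
      + ∑ i, luxNorm B Ω (fun x => Du x i - gradOf (φ n) x i)) atTop (𝓝 0)

/-- Membership of a triple `(u₀,u₁,u₂)` (together with the respective gradients) in
`𝔽₀^{1,B} = W₀¹L^B(Ω) × L^B(Ω; W¹_# L^B(Y)) × L^B(Ω; L^B_{per}(Y; W¹_# L^B(Z)))`. -/
structure MemF01 {d : ℕ} (B : ℝ → ℝ) (Ω : Set (Rd d))
    (u₀ : Rd d → ℝ) (Du₀ : Rd d → Rd d)
    (u₁ : Rd d → Rd d → ℝ) (Du₁ : Rd d → Rd d → Rd d)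
    (u₂ : Rd d → Rd d → Rd d → ℝ) (Du₂ : Rd d → Rd d → Rd d → Rd d) : Prop where
  mem0 : MemW0 B Ω u₀ Du₀
  meas1 : Measurable fun p : Rd d × Rd d => u₁ p.1 p.2
  per1 : ∀ x, YPeriodic (u₁ x)
  avg1 : ∀ᵐ x ∂(volume.restrict Ω), ∫ y in unitCube d, u₁ x y = 0
  grad1 : ∀ᵐ x ∂(volume.restrict Ω), HasWeakGradPer (u₁ x) (Du₁ x)
  fin1 : (∫⁻ x in Ω, ∫⁻ y in unitCube d, ENNReal.ofReal (B ‖Du₁ x y‖)) < ⊤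
  meas2 : Measurable fun p : Rd d × Rd d × Rd d => u₂ p.1 p.2.1 p.2.2
  per2 : ∀ x, YZPeriodic (u₂ x)
  avg2 : ∀ᵐ x ∂(volume.restrict Ω), ∀ᵐ y ∂(volume.restrict (unitCube d)),
    ∫ z in unitCube d, u₂ x y z = 0
  grad2 : ∀ᵐ x ∂(volume.restrict Ω), ∀ᵐ y ∂(volume.restrict (unitCube d)),
    HasWeakGradPer (u₂ x y) (Du₂ x y)
  fin2 : (∫⁻ x in Ω, ∫⁻ y in unitCube d, ∫⁻ z in unitCube d,
    ENNReal.ofReal (B ‖Du₂ x y z‖)) < ⊤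

/-- The standing hypotheses on the pair of N-functions `Φ, Ψ`:
`C²` regularity, `Φ(t)=∫₀ᵗ φ'`, `Ψ(t)=∫₀ᵗ ψ'`,
`1 < ρ₀ ≤ tψ'(t)/Ψ(t) ≤ ρ₁ ≤ tφ'(t)/Φ(t) ≤ ρ₂` and `Φ` dominates `Ψ`. -/
structure OrliczPair (Φ φ' Ψ ψ' : ℝ → ℝ) (ρ₀ ρ₁ ρ₂ : ℝ) : Prop where
  nPhi : IsNFunction Φ
  nPsi : IsNFunction Ψ
  c2Phi : ContDiffOn ℝ 2 Φ (Set.Ici 0)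
  c2Psi : ContDiffOn ℝ 2 Ψ (Set.Ici 0)
  derPhi : ∀ t : ℝ, 0 ≤ t → Φ t = ∫ s in (0:ℝ)..t, φ' s
  derPsi : ∀ t : ℝ, 0 ≤ t → Ψ t = ∫ s in (0:ℝ)..t, ψ' s
  one_lt : 1 < ρ₀
  rho_bounds : ∀ t : ℝ, 0 < t →
    ρ₀ ≤ t * ψ' t / Ψ t ∧ t * ψ' t / Ψ t ≤ ρ₁ ∧ ρ₁ ≤ t * φ' t / Φ t ∧ t * φ' t / Φ t ≤ ρ₂
  dominates : ∃ k : ℝ, 0 < k ∧ ∀ t : ℝ, 0 ≤ t → Ψ t ≤ Φ (k * t)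

/-- Hypotheses (H1)–(H4) on the monotone operator `a`. -/
structure HypA {d : ℕ} (a : Rd d → Rd d → ℝ → Rd d → Rd d)
    (Φ Ψ : ℝ → ℝ) (h : ℝ → ℝ) (c₁ c₂ c₃ c₄ : ℝ) : Prop where
  -- (H1)
  meas_y : ∀ (z : Rd d) (ζ : ℝ) (lam : Rd d), Measurable fun y => a y z ζ lam
  cont_z : ∀ᵐ y ∂(volume : Measure (Rd d)), ∀ (ζ : ℝ) (lam : Rd d),
    Continuous fun z => a y z ζ lam
  bound_zero : ∃ C : ℝ, ∀ᵐ p ∂(volume : Measure (Rd d × Rd d)), ‖a p.1 p.2 0 0‖ ≤ C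
  -- (H2)
  hc₁ : 1/2 < c₁
  hc₂ : 0 < c₂
  hc₃ : 1/2 < c₃
  hc₄ : 0 < c₄
  lip : ∀ᵐ y ∂(volume : Measure (Rd d)), ∀ (z : Rd d) (ζ ζ' : ℝ) (lam lam' : Rd d),
    ‖a y z ζ lam - a y z ζ' lam'‖ ≤
      c₁ * Function.invFun (conjN Ψ) (Φ (c₂ * |ζ - ζ'|))
      + c₃ * Function.invFun (conjN Φ) (Φ (c₄ * ‖lam - lam'‖))
  -- (H3)
  h_cont : ContinuousOn h (Set.Ici 0)
  h_decr : ∀ s t : ℝ, 0 ≤ s → s ≤ t → h t ≤ h s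
  h_lt_one : ∀ t : ℝ, 0 ≤ t → h t < 1
  h_pos : ∃ m : ℝ, 0 < m ∧ ∀ t : ℝ, 0 ≤ t → m ≤ h t
  coercive : ∀ᵐ p ∂(volume : Measure (Rd d × Rd d)), ∀ (ζ : ℝ) (lam : Rd d),
    Function.invFun (conjN Φ) (Φ (h |ζ|)) * Φ ‖lam‖ ≤ dotp (a p.1 p.2 ζ lam) lam
  -- (H4)
  strict_mono : ∀ᵐ p ∂(volume : Measure (Rd d × Rd d)), ∀ (ζ : ℝ) (lam lam' : Rd d),
    lam ≠ lam' → 0 < dotp (a p.1 p.2 ζ lam - a p.1 p.2 ζ lam') (lam - lam')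

/-- Hypothesis (H5): periodicity in the first two variables and local uniform continuity
in the first variable. -/
structure HypA5 {d : ℕ} (a : Rd d → Rd d → ℝ → Rd d → Rd d) : Prop where
  periodic : ∀ (y z : Rd d) (k k' : Fin d → ℤ) (ζ : ℝ) (lam : Rd d),
    a (perShift y k) (perShift z k') ζ lam = a y z ζ lam
  translate_cont : ∀ Λ : Set (Rd d), Bornology.IsBounded Λ → ∀ η : ℝ, 0 < η →
    ∃ ρ : ℝ, 0 < ρ ∧ ∀ ξ : Rd d, ‖ξ‖ ≤ ρ →
      ∀ᵐ y ∂(volume.restrict Λ), ∀ (z : Rd d) (ζ : ℝ) (lam : Rd d),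
        ‖a (WithLp.toLp 2 (fun i => y i - ξ i)) z ζ lam - a y z ζ lam‖ ≤ η

/-- Hypothesis (H6): strict monotonicity with an Orlicz modulus. -/
def HypA6 {d : ℕ} (a : Rd d → Rd d → ℝ → Rd d → Rd d) (Φ : ℝ → ℝ) (c₅ : ℝ) : Prop :=
  0 < c₅ ∧ ∀ᵐ p ∂(volume : Measure (Rd d × Rd d)), ∀ (ζ ζ' : ℝ) (lam lam' : Rd d),
    c₅ * Φ ‖lam - lam'‖ ≤ dotp (a p.1 p.2 ζ lam - a p.1 p.2 ζ' lam') (lam - lam')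

/-- The coercivity constant `θ = Φ̃⁻¹(Φ(min_{t ≥ 0} h(t)))`. -/
def thetaOf (Φ h : ℝ → ℝ) : ℝ := Function.invFun (conjN Φ) (Φ (sInf (h '' Set.Ici 0)))

/-- `Ω` has Lipschitz boundary: near every boundary point, `Ω` is the subgraph region of a
Lipschitz function over a hyperplane. -/
def HasLipschitzBoundary {d : ℕ} (Ω : Set (Rd d)) : Prop :=
  ∀ p ∈ frontier Ω, ∃ (ν : Rd d) (g : Rd d → ℝ) (K : NNReal) (U : Set (Rd d)),
    ‖ν‖ = 1 ∧ IsOpen U ∧ p ∈ U ∧ LipschitzWith K g ∧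
    ∀ x ∈ U, (x ∈ Ω ↔ g (x - dotp x ν • ν) < dotp x ν)

/-- A smooth function `v(x,y)`, compactly supported in `x ∈ Ω` and `Y`-periodic in `y`. -/
def SmoothCptPer1 {d : ℕ} (Ω : Set (Rd d)) (v : Rd d → Rd d → ℝ) : Prop :=
  ContDiff ℝ (⊤ : ℕ∞) (fun p : Rd d × Rd d => v p.1 p.2) ∧
  (∃ K : Set (Rd d), IsCompact K ∧ K ⊆ Ω ∧ ∀ x ∉ K, ∀ y, v x y = 0) ∧
  ∀ x, YPeriodic (v x)

/-- A smooth function `v(x,y,z)`, compactly supported in `x ∈ Ω` and `Y × Z`-periodic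
in `(y,z)`. -/
def SmoothCptPer2 {d : ℕ} (Ω : Set (Rd d)) (v : Rd d → Rd d → Rd d → ℝ) : Prop :=
  ContDiff ℝ (⊤ : ℕ∞) (fun p : Rd d × Rd d × Rd d => v p.1 p.2.1 p.2.2) ∧
  (∃ K : Set (Rd d), IsCompact K ∧ K ⊆ Ω ∧ ∀ x ∉ K, ∀ y z, v x y z = 0) ∧
  ∀ x, YZPeriodic (v x)

lemma conj_set_nonempty (B : ℝ → ℝ) (t : ℝ) :
    {v : ℝ | ∃ s : ℝ, 0 ≤ s ∧ v = s * t - B s}.Nonempty :=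
  ⟨0 * t - B 0, 0, le_rfl, rfl⟩

lemma conj_set_bddAbove {B : ℝ → ℝ} (hB : IsNFunction B) {t : ℝ} (ht : 0 ≤ t) :
    BddAbove {v : ℝ | ∃ s : ℝ, 0 ≤ s ∧ v = s * t - B s} := by
  obtain ⟨M, hM⟩ := (hB.tendsto_atTop.eventually_ge_atTop (t + 1)).exists_forall_of_atTop
  refine ⟨max M 1 * t, ?_⟩
  rintro v ⟨s, hs, rfl⟩
  rcases le_or_gt s (max M 1) with h | h
  · have := hB.nonneg s
    nlinarith
  · have hsM : M ≤ s := le_trans (le_max_left _ _) h.le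
    have hs1 : (1:ℝ) ≤ s := le_trans (le_max_right _ _) h.le
    have hBs : t + 1 ≤ B s / s := hM s hsM
    have hspos : 0 < s := lt_of_lt_of_le one_pos hs1
    have hmul : (t + 1) * s ≤ B s := by
      rw [le_div_iff₀ hspos] at hBs; linarith
    have h0M : (0:ℝ) ≤ max M 1 := le_trans zero_le_one (le_max_right M 1)
    nlinarith [mul_nonneg h0M ht]

lemma conjN_nonneg {B : ℝ → ℝ} (hB : IsNFunction B) {t : ℝ} (ht : 0 ≤ t) :
    0 ≤ conjN B t := by
  have h0 : (0:ℝ) ∈ {v : ℝ | ∃ s : ℝ, 0 ≤ s ∧ v = s * t - B s} :=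
    ⟨0, le_rfl, by simp [hB.map_zero]⟩
  exact le_csSup (conj_set_bddAbove hB ht) h0

lemma conjN_div_le {B : ℝ → ℝ} (hB : IsNFunction B) {t k : ℝ} (ht : 0 ≤ t) (hk : 1 ≤ k) :
    conjN B (t / k) ≤ conjN B t / k := by
  have hk0 : 0 < k := lt_of_lt_of_le one_pos hk
  refine csSup_le (conj_set_nonempty B _) ?_
  rintro v ⟨s, hs, rfl⟩
  rw [le_div_iff₀ hk0]
  have hmem : s * t - B s ≤ conjN B t :=
    le_csSup (conj_set_bddAbove hB ht) ⟨s, hs, rfl⟩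
  have hBs := hB.nonneg s
  have heq : (s * (t / k) - B s) * k = s * t - B s * k := by field_simp
  nlinarith

/-- If `u_ε ⇀ u₀` weakly reiteratively two-scale in `L^B(Ω)`, then
(i) `u_ε ⇀ ∫_Z u₀(·,·,z) dz` weakly two-scale, and (ii) `u_ε ⇀ ∫_Y∫_Z u₀ dy dz`
weakly in `L^B(Ω)`. -/
theorem reiterated_two_scale_marginals
    {d : ℕ} (Ω : Set (Rd d)) (hΩo : IsOpen Ω) (hΩb : Bornology.IsBounded Ω)
    (B : ℝ → ℝ) (hB : IsNFunction B) (hΔ : Delta2 B) (hΔc : Delta2 (conjN B))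
    (u : ℝ → Rd d → ℝ) (hmeas : ∀ ε : ℝ, 0 < ε → Measurable (u ε))
    (hfin : ∀ ε : ℝ, 0 < ε → (∫⁻ x in Ω, ENNReal.ofReal (B (|u ε x|))) < ⊤)
    (u₀ : Rd d → Rd d → Rd d → ℝ) (hgood : GoodLimit B Ω u₀)
    (hconv : WeakReitTwoScale B Ω (𝓝[>] (0 : ℝ)) id u u₀) :
    (∀ g : Rd d → Rd d → ℝ,
      (∀ y, Measurable fun x => g x y) → (∀ x, Continuous (g x)) →
      (∀ x, YPeriodic (g x)) → FiniteLux (conjN B) Ω (supY g) →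
      Tendsto (fun ε : ℝ => ∫ x in Ω, u ε x * g x (scaled x ε)) (𝓝[>] (0 : ℝ))
        (𝓝 (∫ x in Ω, ∫ y in unitCube d, (∫ z in unitCube d, u₀ x y z) * g x y))) ∧
    (∀ g : Rd d → ℝ, Measurable g →
      ((∫⁻ x in Ω, ENNReal.ofReal (conjN B (|g x|))) < ⊤) →
      Tendsto (fun ε : ℝ => ∫ x in Ω, u ε x * g x) (𝓝[>] (0 : ℝ))
        (𝓝 (∫ x in Ω, (∫ y in unitCube d, ∫ z in unitCube d, u₀ x y z) * g x))) := by
  constructor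
  · intro g hgm hgc hgp hglux
    have hf : AdmissibleTest (conjN B) Ω (fun x y _ => g x y) := by
      refine ⟨fun y _ => hgm y, fun x => (hgc x).comp continuous_fst,
        fun x y z k h => hgp x y k, ?_⟩
      have hsup : supYZ (fun x y (_ : Rd d) => g x y) = supY g := by
        funext x
        unfold supYZ supY
        congr 1
        ext v
        exact ⟨fun ⟨y, _, h⟩ => ⟨y, h⟩, fun ⟨y, h⟩ => ⟨y, 0, h⟩⟩
      rw [hsup]
      exact hglux
    have h := hconv _ hf
    simp only [id] at h
    have hval : (∫ x in Ω, ∫ y in unitCube d, ∫ z in unitCube d, u₀ x y z * g x y) =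
        ∫ x in Ω, ∫ y in unitCube d, (∫ z in unitCube d, u₀ x y z) * g x y := by
      simp_rw [integral_mul_const]
    rw [← hval]
    exact h
  · intro g hgm hgfin
    have hf : AdmissibleTest (conjN B) Ω (fun x _ _ => g x) := by
      refine ⟨fun _ _ => hgm, fun _ => continuous_const, fun _ _ _ _ _ => rfl, ?_⟩
      have hsup : supYZ (fun x (_ _ : Rd d) => g x) = fun x => |g x| := by
        funext x
        unfold supYZ
        have hset : {v : ℝ | ∃ _ _ : Rd d, v = |g x|} = {|g x|} := by
          ext v
          simp
        rw [hset, csSup_singleton]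
      rw [hsup]
      set I := ∫⁻ x in Ω, ENNReal.ofReal (conjN B (|g x|)) with hI
      set k := max 1 I.toReal with hk
      have hk1 : (1:ℝ) ≤ k := le_max_left _ _
      have hk0 : (0:ℝ) < k := lt_of_lt_of_le one_pos hk1
      refine ⟨k, hk0, ?_⟩
      have hIk : I ≤ ENNReal.ofReal k := by
        rw [← ENNReal.ofReal_toReal hgfin.ne]
        exact ENNReal.ofReal_le_ofReal (le_max_right _ _)
      calc modular (conjN B) Ω (fun x => |g x|) k
          ≤ ∫⁻ x in Ω, ENNReal.ofReal (conjN B (|g x|)) * ENNReal.ofReal (1/k) := by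
            refine lintegral_mono fun x => ?_
            rw [← ENNReal.ofReal_mul' (by positivity)]
            apply ENNReal.ofReal_le_ofReal
            rw [abs_abs]
            calc conjN B (|g x| / k) ≤ conjN B (|g x|) / k :=
                  conjN_div_le hB (abs_nonneg _) hk1
              _ = conjN B (|g x|) * (1/k) := by ring
        _ = I * ENNReal.ofReal (1/k) := lintegral_mul_const' _ _ ENNReal.ofReal_ne_top
        _ ≤ ENNReal.ofReal k * ENNReal.ofReal (1/k) := mul_le_mul_left hIk _
        _ = 1 := by
            rw [← ENNReal.ofReal_mul hk0.le, mul_one_div, div_self hk0.ne']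
            simp
    have h := hconv _ hf
    have hval : (∫ x in Ω, ∫ y in unitCube d, ∫ z in unitCube d, u₀ x y z * g x) =
        ∫ x in Ω, (∫ y in unitCube d, ∫ z in unitCube d, u₀ x y z) * g x := by
      simp_rw [integral_mul_const]
    rw [← hval]
    exact h
end
end

section
/- Let B be an N-function. There exists a constant c > 0 such that for every continuous Y×Z-periodic function u : ℝᵈ×ℝᵈ → ℝ, one has ‖u‖_{B,Y×Z} ≤ c · sup_{0<ε≤1} inf{k > 0 : ∫_{B_d(0,1)} B( (sup_{z∈ℝᵈ} |u(x/ε, z)|) / k ) dx ≤ 1}, where B_d(0,1) is the open unit ball of ℝᵈ centered at the origin. -/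
open MeasureTheory Filter Topology
open scoped ENNReal

noncomputable section

section XiAux

open Set
open scoped Pointwise

variable {d : ℕ}

lemma nfun_scale {B : ℝ → ℝ} (hB : IsNFunction B) {t μ : ℝ} (ht : 0 ≤ t)
    (h0 : 0 ≤ μ) (h1 : μ ≤ 1) : B (μ * t) ≤ μ * B t := by
  have h := hB.convexOn.2 (Set.self_mem_Ici (a := (0:ℝ))) (Set.mem_Ici.2 ht)
    (show (0:ℝ) ≤ 1 - μ by linarith) h0 (show (1 - μ) + μ = 1 by ring)
  simpa [hB.map_zero, smul_eq_mul] using h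

lemma nfun_mono {B : ℝ → ℝ} (hB : IsNFunction B) {s t : ℝ} (hs : 0 ≤ s) (hst : s ≤ t) :
    B s ≤ B t := by
  rcases eq_or_lt_of_le hst with rfl | h
  · exact le_refl _
  have ht : 0 < t := lt_of_le_of_lt hs h
  have h1 : s / t ≤ 1 := by rw [div_le_one ht]; exact hst
  have h2 := nfun_scale hB (t := t) (μ := s / t) ht.le (by positivity) h1
  rw [div_mul_cancel₀ _ ht.ne'] at h2
  nlinarith [hB.nonneg t]

lemma isOpen_unitCube : IsOpen (unitCube d) := by
  have h : unitCube d = ⋂ i : Fin d, ((fun y : Rd d => y i) ⁻¹' Set.Ioo (-(1/2:ℝ)) (1/2)) := by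
    ext y; simp [unitCube]
  rw [h]
  exact isOpen_iInter_of_finite fun i =>
    (isOpen_Ioo).preimage ((continuous_apply i).comp (PiLp.continuous_ofLp (p := 2) (β := fun _ : Fin d => ℝ)))

lemma volume_unitCube : (volume : Measure (Rd d)) (unitCube d) = 1 := by
  have hpre : unitCube d = ((MeasurableEquiv.toLp 2 (Fin d → ℝ)).symm) ⁻¹'
      (Set.pi Set.univ fun _ : Fin d => Set.Ioo (-(1/2 : ℝ)) (1/2)) := by
    ext y
    simp [unitCube, MeasurableEquiv.coe_toLp_symm, Set.mem_pi]
  rw [hpre, (EuclideanSpace.volume_preserving_symm_measurableEquiv_toLp (Fin d)).measure_preimage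
    ((MeasurableSet.univ_pi fun _ => measurableSet_Ioo).nullMeasurableSet)]
  rw [volume_pi_pi]
  norm_num

lemma lintegral_scaled {ε : ℝ} (hε : 0 < ε) (f : Rd d → ℝ≥0∞) :
    ∫⁻ x in ε • unitCube d, f (ε⁻¹ • x) = ENNReal.ofReal (ε ^ d) * ∫⁻ y in unitCube d, f y := by
  have hεne : ε ≠ 0 := hε.ne'
  set e : Rd d ≃ᵐ Rd d := (Homeomorph.smulOfNeZero ε hεne).toMeasurableEquiv with he_def
  have he : ⇑e = (fun x : Rd d => ε • x) := rfl
  have hmap : Measure.map (fun x : Rd d => ε • x) (volume : Measure (Rd d))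
      = ENNReal.ofReal (|(ε ^ d)⁻¹|) • volume := by
    have h := Measure.map_addHaar_smul (volume : Measure (Rd d)) hεne
    rwa [finrank_euclideanSpace_fin] at h
  have hvol : (volume : Measure (Rd d))
      = ENNReal.ofReal (ε ^ d) • Measure.map (fun x : Rd d => ε • x) volume := by
    rw [hmap, smul_smul, abs_of_nonneg (by positivity),
      ← ENNReal.ofReal_mul (by positivity), mul_inv_cancel₀ (by positivity),
      ENNReal.ofReal_one, one_smul]
  have hS : MeasurableSet (ε • unitCube d) := (isOpen_unitCube.smul₀ hεne).measurableSet
  have hpre : (fun x : Rd d => ε • x) ⁻¹' (ε • unitCube d) = unitCube d := by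
    rw [Set.preimage_smul₀ hεne, smul_smul, inv_mul_cancel₀ hεne, one_smul]
  calc ∫⁻ x in ε • unitCube d, f (ε⁻¹ • x)
      = ∫⁻ x, f (ε⁻¹ • x)
        ∂((ENNReal.ofReal (ε ^ d) • Measure.map (fun x : Rd d => ε • x) volume).restrict
          (ε • unitCube d)) := by rw [← hvol]
    _ = ENNReal.ofReal (ε ^ d) * ∫⁻ x, f (ε⁻¹ • x)
        ∂((Measure.map (fun x : Rd d => ε • x) volume).restrict (ε • unitCube d)) := by
          rw [Measure.restrict_smul, lintegral_smul_measure, smul_eq_mul]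
    _ = ENNReal.ofReal (ε ^ d) * ∫⁻ x, f (ε⁻¹ • x)
        ∂(Measure.map (fun x : Rd d => ε • x)
          (volume.restrict ((fun x : Rd d => ε • x) ⁻¹' (ε • unitCube d)))) := by
          rw [Measure.restrict_map (measurable_const_smul ε) hS]
    _ = ENNReal.ofReal (ε ^ d) * ∫⁻ y, f (ε⁻¹ • (ε • y))
        ∂(volume.restrict ((fun x : Rd d => ε • x) ⁻¹' (ε • unitCube d))) := by
          rw [← he, MeasureTheory.lintegral_map_equiv]
          simp only [he]
    _ = ENNReal.ofReal (ε ^ d) * ∫⁻ y in unitCube d, f y := by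
          rw [hpre]
          congr 1
          refine lintegral_congr fun y => ?_
          rw [inv_smul_smul₀ hεne]

lemma smul_unitCube_subset_ball {ε : ℝ} (hε : 0 < ε) (hεle : ε ≤ 1/(d+1)) :
    ε • unitCube d ⊆ Metric.ball (0 : Rd d) 1 := by
  rintro x ⟨y, hy, rfl⟩
  rw [Metric.mem_ball, dist_zero_right, norm_smul, Real.norm_eq_abs, abs_of_pos hε]
  have hy' : ∀ i, -(1/2:ℝ) < y i ∧ y i < 1/2 := hy
  have hnorm : ‖y‖ ≤ ((d:ℝ)+1)/2 := by
    rw [EuclideanSpace.norm_eq]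
    have hsum : ∑ i, ‖y i‖^2 ≤ ((d:ℝ)+1)^2/4 := by
      calc ∑ i, ‖y i‖^2 ≤ ∑ _i : Fin d, (1/4:ℝ) := Finset.sum_le_sum (fun i _ => by
            have h1 := (hy' i).1; have h2 := (hy' i).2
            rw [Real.norm_eq_abs]; rw [sq_abs]; nlinarith)
        _ = (d:ℝ)/4 := by rw [Finset.sum_const, Finset.card_univ, Fintype.card_fin, nsmul_eq_mul]; ring
        _ ≤ ((d:ℝ)+1)^2/4 := by nlinarith [(Nat.cast_nonneg d : (0:ℝ) ≤ (d:ℝ))]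
    calc Real.sqrt (∑ i, ‖y i‖^2) ≤ Real.sqrt (((d:ℝ)+1)^2/4) := Real.sqrt_le_sqrt hsum
      _ = ((d:ℝ)+1)/2 := by
          rw [show ((d:ℝ)+1)^2/4 = (((d:ℝ)+1)/2)^2 by ring, Real.sqrt_sq (by positivity)]
  have hprod : (1/((d:ℝ)+1)) * (((d:ℝ)+1)/2) = 1/2 := by
    have : ((d:ℝ)+1) ≠ 0 := by positivity
    field_simp
  calc ε * ‖y‖ ≤ (1/((d:ℝ)+1)) * (((d:ℝ)+1)/2) :=
        mul_le_mul hεle hnorm (norm_nonneg y) (by positivity)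
    _ < 1 := by rw [hprod]; norm_num

lemma norm_perShift_le (y : Rd d) : ∃ k : Fin d → ℤ, ‖perShift y k‖ ≤ (d:ℝ) + 1 := by
  refine ⟨fun i => -⌊y i⌋, ?_⟩
  have hco : ∀ i, |perShift y (fun i => -⌊y i⌋) i| ≤ 1 := by
    intro i
    have h1 := Int.fract_nonneg (y i)
    have h2 := Int.fract_lt_one (y i)
    have : perShift y (fun i => -⌊y i⌋) i = Int.fract (y i) := by
      simp only [perShift, PiLp.toLp_apply, Int.fract]; push_cast; ring
    rw [this, abs_of_nonneg h1]; linarith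
  rw [EuclideanSpace.norm_eq]
  have hsum : ∑ i, ‖perShift y (fun i => -⌊y i⌋) i‖^2 ≤ (d:ℝ) := by
    calc ∑ i, ‖perShift y (fun i => -⌊y i⌋) i‖^2 ≤ ∑ _i : Fin d, (1:ℝ) :=
          Finset.sum_le_sum (fun i _ => by
            have h12 := abs_le.mp (hco i)
            rw [Real.norm_eq_abs, sq_abs]; nlinarith)
      _ = (d:ℝ) := by rw [Finset.sum_const, Finset.card_univ, Fintype.card_fin, nsmul_eq_mul, mul_one]
  calc Real.sqrt (∑ i, ‖perShift y (fun i => -⌊y i⌋) i‖^2) ≤ Real.sqrt d :=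
        Real.sqrt_le_sqrt hsum
    _ ≤ (d:ℝ) + 1 := by
        rw [show ((d:ℝ)+1) = Real.sqrt (((d:ℝ)+1)^2) from
          (Real.sqrt_sq (by positivity)).symm]
        exact Real.sqrt_le_sqrt (by nlinarith [(Nat.cast_nonneg d : (0:ℝ) ≤ (d:ℝ))])

lemma bounded_of_periodic {u : Rd d → Rd d → ℝ}
    (hc : Continuous fun p : Rd d × Rd d => u p.1 p.2) (hp : YZPeriodic u) :
    ∃ M : ℝ, 0 ≤ M ∧ ∀ y z, |u y z| ≤ M := by
  have hK : IsCompact (Metric.closedBall (0 : Rd d) ((d:ℝ)+1)) := isCompact_closedBall _ _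
  obtain ⟨C, hC⟩ := (hK.prod hK).exists_bound_of_continuousOn hc.continuousOn
  refine ⟨max C 0, le_max_right _ _, fun y z => ?_⟩
  obtain ⟨k, hk⟩ := norm_perShift_le y
  obtain ⟨h, hh⟩ := norm_perShift_le z
  have hval : u (perShift y k) (perShift z h) = u y z := hp y z k h
  have hmem : (perShift y k, perShift z h) ∈
      (Metric.closedBall (0 : Rd d) ((d:ℝ)+1)) ×ˢ (Metric.closedBall (0 : Rd d) ((d:ℝ)+1)) := by
    constructor <;> simp only [Metric.mem_closedBall, dist_zero_right] <;> assumption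
  have := hC _ hmem
  rw [Real.norm_eq_abs] at this
  simp only at this
  rw [← hval]
  exact le_trans this (le_max_left _ _)

end XiAux

open scoped Pointwise

/-- The `L^B(Y × Z)` Luxemburg norm of a continuous `Y × Z`-periodic
function is controlled by its `Ξ^B(ℝᵈ_y; C_b(ℝᵈ_z))`-norm. -/
theorem luxemburg_norm_le_xi_norm
    {d : ℕ} (B : ℝ → ℝ) (hB : IsNFunction B) :
    ∃ c : ℝ, 0 < c ∧ ∀ u : Rd d → Rd d → ℝ,
      Continuous (fun p : Rd d × Rd d => u p.1 p.2) → YZPeriodic u →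
      luxNormYZ B u ≤ c * sSup {v : ℝ | ∃ ε : ℝ, 0 < ε ∧ ε ≤ 1 ∧
        v = sInf {k : ℝ | 0 < k ∧
          (∫⁻ x in Metric.ball (0 : Rd d) 1,
            ENNReal.ofReal (B (supZ u (scaled x ε) / k))) ≤ 1}} := by
  classical
  set ε₀ : ℝ := 1/((d:ℝ)+1) with hε₀def
  have hε₀pos : 0 < ε₀ := by positivity
  have hε₀le1 : ε₀ ≤ 1 := by
    rw [hε₀def, div_le_one (by positivity)]
    nlinarith [(Nat.cast_nonneg d : (0:ℝ) ≤ (d:ℝ))]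
  set c : ℝ := (ε₀ ^ d)⁻¹ with hcdef
  have hpowpos : 0 < ε₀ ^ d := pow_pos hε₀pos d
  have hcpos : 0 < c := by rw [hcdef]; positivity
  refine ⟨c, hcpos, fun u hc hp => ?_⟩
  obtain ⟨M, hM0, hM⟩ := bounded_of_periodic hc hp
  have hbdd : ∀ y : Rd d, BddAbove {v : ℝ | ∃ z, v = |u y z|} :=
    fun y => ⟨M, by rintro v ⟨z, rfl⟩; exact hM y z⟩
  have hne : ∀ y : Rd d, {v : ℝ | ∃ z, v = |u y z|}.Nonempty := fun y => ⟨|u y 0|, 0, rfl⟩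
  have habs : ∀ y z, |u y z| ≤ supZ u y := fun y z => le_csSup (hbdd y) ⟨z, rfl⟩
  have hsup0 : ∀ y, 0 ≤ supZ u y := fun y => le_trans (abs_nonneg _) (habs y 0)
  have hsupM : ∀ y, supZ u y ≤ M := fun y =>
    csSup_le (hne y) (by rintro v ⟨z, rfl⟩; exact hM y z)
  have hsc : ∀ (x : Rd d) (ε : ℝ), scaled x ε = ε⁻¹ • x := by
    intro x ε; ext i
    simp [scaled, PiLp.smul_apply, smul_eq_mul, div_eq_inv_mul]
  -- a uniform element K₀ of all the inner sets
  set Vb : ℝ≥0∞ := volume (Metric.ball (0 : Rd d) 1) with hVbdef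
  have hVbfin : Vb ≠ ⊤ := measure_ball_lt_top.ne
  set δ : ℝ := (Vb.toReal + 1)⁻¹ with hδdef
  have hδpos : 0 < δ := by rw [hδdef]; positivity
  have hδVb : ENNReal.ofReal δ * Vb ≤ 1 := by
    rw [← ENNReal.ofReal_toReal hVbfin, ← ENNReal.ofReal_mul hδpos.le]
    refine le_trans (ENNReal.ofReal_le_ofReal ?_) (le_of_eq ENNReal.ofReal_one)
    have hT : 0 ≤ Vb.toReal := ENNReal.toReal_nonneg
    calc δ * Vb.toReal ≤ δ * (Vb.toReal + 1) :=
          mul_le_mul_of_nonneg_left (by linarith) hδpos.le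
      _ = 1 := by rw [hδdef]; field_simp
  obtain ⟨t₀, ht₀pos, ht₀⟩ : ∃ t₀ : ℝ, 0 < t₀ ∧ B t₀ ≤ δ := by
    have hco : Filter.Tendsto B (𝓝 0) (𝓝 0) := by
      have h := hB.continuous.tendsto 0
      rwa [hB.map_zero] at h
    have hev := Metric.tendsto_nhds.1 hco δ hδpos
    rw [Metric.eventually_nhds_iff] at hev
    obtain ⟨r, hr, hball⟩ := hev
    refine ⟨r/2, by positivity, ?_⟩
    have h := hball (y := r/2)
      (by rw [Real.dist_eq, sub_zero, abs_of_pos (by positivity)]; linarith)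
    rw [Real.dist_eq, sub_zero] at h
    exact le_trans (le_abs_self _) h.le
  set K₀ : ℝ := (M+1)/t₀ with hK₀def
  have hK₀pos : 0 < K₀ := by rw [hK₀def]; positivity
  have hK₀mem : ∀ ε : ℝ, (∫⁻ x in Metric.ball (0 : Rd d) 1,
      ENNReal.ofReal (B (supZ u (scaled x ε) / K₀))) ≤ 1 := by
    intro ε
    have htK : t₀ * K₀ = M + 1 := by rw [hK₀def]; field_simp
    have hpt : ∀ x : Rd d, ENNReal.ofReal (B (supZ u (scaled x ε) / K₀))
        ≤ ENNReal.ofReal δ := by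
      intro x
      apply ENNReal.ofReal_le_ofReal
      have harg : supZ u (scaled x ε) / K₀ ≤ t₀ := by
        rw [div_le_iff₀ hK₀pos, htK]
        linarith [hsupM (scaled x ε)]
      exact le_trans (nfun_mono hB (div_nonneg (hsup0 _) hK₀pos.le) harg) ht₀
    calc (∫⁻ x in Metric.ball (0 : Rd d) 1, ENNReal.ofReal (B (supZ u (scaled x ε) / K₀)))
        ≤ ∫⁻ _x in Metric.ball (0 : Rd d) 1, ENNReal.ofReal δ := lintegral_mono fun x => hpt x
      _ = ENNReal.ofReal δ * Vb := by rw [setLIntegral_const]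
      _ ≤ 1 := hδVb
  -- main step: each admissible k at scale ε₀ bounds the Luxemburg norm
  have stepB : ∀ k : ℝ, 0 < k →
      (∫⁻ x in Metric.ball (0 : Rd d) 1, ENNReal.ofReal (B (supZ u (scaled x ε₀) / k))) ≤ 1 →
      luxNormYZ B u ≤ c * k := by
    intro k hk hI
    have hck : 0 < c * k := mul_pos hcpos hk
    have hdiv : ∀ y : Rd d, supZ u y / (c * k) = ε₀^d * (supZ u y / k) := by
      intro y
      rw [hcdef]
      field_simp
    have hYmod : (∫⁻ y in unitCube d, ENNReal.ofReal (B (supZ u y / (c * k)))) ≤ 1 := by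
      have hpow_le1 : ε₀ ^ d ≤ 1 := pow_le_one₀ hε₀pos.le hε₀le1
      have hpt : ∀ y : Rd d, ENNReal.ofReal (B (supZ u y / (c * k)))
          ≤ ENNReal.ofReal (ε₀^d) * ENNReal.ofReal (B (supZ u y / k)) := by
        intro y
        rw [← ENNReal.ofReal_mul hpowpos.le]
        apply ENNReal.ofReal_le_ofReal
        rw [hdiv y]
        exact nfun_scale hB (div_nonneg (hsup0 y) hk.le) hpowpos.le hpow_le1
      calc (∫⁻ y in unitCube d, ENNReal.ofReal (B (supZ u y / (c * k))))
          ≤ ∫⁻ y in unitCube d, ENNReal.ofReal (ε₀^d) * ENNReal.ofReal (B (supZ u y / k)) :=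
            lintegral_mono fun y => hpt y
        _ = ENNReal.ofReal (ε₀^d) * ∫⁻ y in unitCube d, ENNReal.ofReal (B (supZ u y / k)) :=
            lintegral_const_mul' _ _ ENNReal.ofReal_ne_top
        _ = ∫⁻ x in ε₀ • unitCube d, ENNReal.ofReal (B (supZ u (ε₀⁻¹ • x) / k)) :=
            (lintegral_scaled hε₀pos (fun y => ENNReal.ofReal (B (supZ u y / k)))).symm
        _ ≤ ∫⁻ x in Metric.ball (0 : Rd d) 1, ENNReal.ofReal (B (supZ u (ε₀⁻¹ • x) / k)) :=
            lintegral_mono_set (smul_unitCube_subset_ball hε₀pos (le_of_eq hε₀def))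
        _ ≤ 1 := by
            refine le_trans (le_of_eq (lintegral_congr fun x => ?_)) hI
            rw [hsc x ε₀]
    have hmodYZ : modularYZ B u (c * k) ≤ 1 := by
      have hinner : ∀ y : Rd d, (∫⁻ z in unitCube d, ENNReal.ofReal (B (|u y z| / (c * k))))
          ≤ ENNReal.ofReal (B (supZ u y / (c * k))) := by
        intro y
        calc (∫⁻ z in unitCube d, ENNReal.ofReal (B (|u y z| / (c * k))))
            ≤ ∫⁻ _z in unitCube d, ENNReal.ofReal (B (supZ u y / (c * k))) :=
              lintegral_mono fun z => ENNReal.ofReal_le_ofReal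
                (nfun_mono hB (div_nonneg (abs_nonneg _) hck.le)
                  ((div_le_div_iff_of_pos_right hck).2 (habs y z)))
          _ = ENNReal.ofReal (B (supZ u y / (c * k))) := by
              rw [setLIntegral_const, volume_unitCube, mul_one]
      calc modularYZ B u (c * k)
          = ∫⁻ y in unitCube d, ∫⁻ z in unitCube d, ENNReal.ofReal (B (|u y z| / (c * k))) := rfl
        _ ≤ ∫⁻ y in unitCube d, ENNReal.ofReal (B (supZ u y / (c * k))) := lintegral_mono hinner
        _ ≤ 1 := hYmod
    exact csInf_le ⟨0, fun x hx => hx.1.le⟩ ⟨hck, hmodYZ⟩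
  -- assemble
  have hSbdd : ∀ ε : ℝ, BddBelow {k : ℝ | 0 < k ∧
      (∫⁻ x in Metric.ball (0 : Rd d) 1,
        ENNReal.ofReal (B (supZ u (scaled x ε) / k))) ≤ 1} :=
    fun ε => ⟨0, fun x hx => hx.1.le⟩
  have hSmem : ∀ ε : ℝ, K₀ ∈ {k : ℝ | 0 < k ∧
      (∫⁻ x in Metric.ball (0 : Rd d) 1,
        ENNReal.ofReal (B (supZ u (scaled x ε) / k))) ≤ 1} :=
    fun ε => ⟨hK₀pos, hK₀mem ε⟩
  have hT0 : luxNormYZ B u ≤ c * sInf {k : ℝ | 0 < k ∧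
      (∫⁻ x in Metric.ball (0 : Rd d) 1,
        ENNReal.ofReal (B (supZ u (scaled x ε₀) / k))) ≤ 1} := by
    have hlb : luxNormYZ B u / c ≤ sInf {k : ℝ | 0 < k ∧
        (∫⁻ x in Metric.ball (0 : Rd d) 1,
          ENNReal.ofReal (B (supZ u (scaled x ε₀) / k))) ≤ 1} := by
      refine le_csInf ⟨K₀, hSmem ε₀⟩ fun k hk => ?_
      rw [div_le_iff₀ hcpos]
      rw [mul_comm]
      exact stepB k hk.1 hk.2
    rw [div_le_iff₀ hcpos] at hlb
    linarith
  have hbddV : BddAbove {v : ℝ | ∃ ε : ℝ, 0 < ε ∧ ε ≤ 1 ∧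
      v = sInf {k : ℝ | 0 < k ∧
        (∫⁻ x in Metric.ball (0 : Rd d) 1,
          ENNReal.ofReal (B (supZ u (scaled x ε) / k))) ≤ 1}} := by
    refine ⟨K₀, ?_⟩
    rintro v ⟨ε, _, _, rfl⟩
    exact csInf_le (hSbdd ε) (hSmem ε)
  have hmemV : sInf {k : ℝ | 0 < k ∧
      (∫⁻ x in Metric.ball (0 : Rd d) 1,
        ENNReal.ofReal (B (supZ u (scaled x ε₀) / k))) ≤ 1} ∈
      {v : ℝ | ∃ ε : ℝ, 0 < ε ∧ ε ≤ 1 ∧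
        v = sInf {k : ℝ | 0 < k ∧
          (∫⁻ x in Metric.ball (0 : Rd d) 1,
            ENNReal.ofReal (B (supZ u (scaled x ε) / k))) ≤ 1}} :=
    ⟨ε₀, hε₀pos, hε₀le1, rfl⟩
  refine le_trans hT0 (mul_le_mul_of_nonneg_left ?_ hcpos.le)
  exact le_csSup hbddV hmemV
end
end
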